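/- For every t ∈ (0,1) there exists R > 0 such that every x ∈ ℝ³ \ D̄ with Φ̃(x) − t ∈ ℤ satisfies ‖x‖ ≤ R. In other words, every level set of the solid-angle map of the unit circle at a level t ≢ 0 (mod 1) is bounded. -/

import Mathlib

open Real MeasureTheory
open scoped ENNReal

/-- The closed unit disk `D̄ = {(y₁,y₂,0) : y₁² + y₂² ≤ 1} ⊂ ℝ³`. -/
def closedUnitDisk : Set (EuclideanSpace ℝ (Fin 3)) :=
  {v | v 0 ^ 2 + v 1 ^ 2 ≤ 1 ∧ v 2 = 0}

/-- The solid angle of the unit circle, computed from the flat disk Seifert surface: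
`Φ̃(x) = −(x₃/(4π)) ∫_{y₁²+y₂²≤1} ‖(y₁,y₂,0) − x‖⁻³ dy₁ dy₂`. -/
noncomputable def solidAngleDisk (x : EuclideanSpace ℝ (Fin 3)) : ℝ :=
  -(x 2 / (4 * π)) *
    ∫ p in {p : ℝ × ℝ | p.1 ^ 2 + p.2 ^ 2 ≤ 1},
      (‖((WithLp.equiv 2 (Fin 3 → ℝ)).symm ![p.1, p.2, 0]) - x‖ ^ 3)⁻¹

lemma disk_measurable : MeasurableSet {p : ℝ × ℝ | p.1 ^ 2 + p.2 ^ 2 ≤ 1} := by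
  have : Continuous fun p : ℝ × ℝ => p.1 ^ 2 + p.2 ^ 2 := by fun_prop
  exact this.measurable measurableSet_Iic

lemma disk_subset : {p : ℝ × ℝ | p.1 ^ 2 + p.2 ^ 2 ≤ 1} ⊆ Set.Icc ((-1 : ℝ), (-1 : ℝ)) (1, 1) := by
  intro p hp
  simp only [Set.mem_setOf_eq] at hp
  have h1 : p.1 ^ 2 ≤ 1 := by nlinarith [sq_nonneg p.2]
  have h2 : p.2 ^ 2 ≤ 1 := by nlinarith [sq_nonneg p.1]
  have h1' := abs_le_one_iff_mul_self_le_one.2 (show p.1 * p.1 ≤ 1 by nlinarith)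
  have h2' := abs_le_one_iff_mul_self_le_one.2 (show p.2 * p.2 ≤ 1 by nlinarith)
  rw [abs_le] at h1' h2'
  constructor <;> constructor <;> simp [h1'.1, h1'.2, h2'.1, h2'.2]

lemma disk_volume_lt : volume {p : ℝ × ℝ | p.1 ^ 2 + p.2 ^ 2 ≤ 1} < ∞ := by
  refine lt_of_le_of_lt (measure_mono disk_subset) ?_
  rw [Set.Icc_prod_eq,
    MeasureTheory.Measure.volume_eq_prod, Measure.prod_prod, Real.volume_Icc]
  norm_num

lemma disk_volume_toReal : (volume {p : ℝ × ℝ | p.1 ^ 2 + p.2 ^ 2 ≤ 1}).toReal ≤ 4 := by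
  have h := measure_mono disk_subset (μ := volume)
  have hIcc : volume (Set.Icc ((-1 : ℝ), (-1 : ℝ)) (1, 1)) = 4 := by
    rw [Set.Icc_prod_eq,
      MeasureTheory.Measure.volume_eq_prod, Measure.prod_prod, Real.volume_Icc]
    norm_num
  calc (volume {p : ℝ × ℝ | p.1 ^ 2 + p.2 ^ 2 ≤ 1}).toReal
      ≤ (volume (Set.Icc ((-1 : ℝ), (-1 : ℝ)) (1, 1))).toReal :=
        ENNReal.toReal_mono (by rw [hIcc]; norm_num) h
    _ = 4 := by rw [hIcc]; norm_num

/-- The key decay estimate: `|Φ̃(x)| ≤ 3 / ‖x‖²` for `‖x‖ ≥ 2`. -/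
lemma solidAngleDisk_decay (x : EuclideanSpace ℝ (Fin 3)) (hx : 2 ≤ ‖x‖) :
    |solidAngleDisk x| ≤ 3 / ‖x‖ ^ 2 := by
  have hxpos : (0 : ℝ) < ‖x‖ := by linarith
  -- pointwise bound on the integrand
  have key : ∀ p ∈ {p : ℝ × ℝ | p.1 ^ 2 + p.2 ^ 2 ≤ 1},
      ‖(‖((WithLp.equiv 2 (Fin 3 → ℝ)).symm ![p.1, p.2, 0]) - x‖ ^ 3)⁻¹‖ ≤ 8 / ‖x‖ ^ 3 := by
    intro p hp
    simp only [Set.mem_setOf_eq] at hp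
    set y := ((WithLp.equiv 2 (Fin 3 → ℝ)).symm ![p.1, p.2, 0]) with hy
    have hynorm : ‖y‖ ≤ 1 := by
      rw [hy, EuclideanSpace.norm_eq]
      simp only [Fin.sum_univ_three, Real.norm_eq_abs, sq_abs]
      have heq : ((WithLp.equiv 2 (Fin 3 → ℝ)).symm ![p.1, p.2, 0]) 0 ^ 2 +
          ((WithLp.equiv 2 (Fin 3 → ℝ)).symm ![p.1, p.2, 0]) 1 ^ 2 +
          ((WithLp.equiv 2 (Fin 3 → ℝ)).symm ![p.1, p.2, 0]) 2 ^ 2 = p.1 ^ 2 + p.2 ^ 2 := by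
        simp
      rw [heq]
      calc Real.sqrt (p.1 ^ 2 + p.2 ^ 2) ≤ Real.sqrt 1 := Real.sqrt_le_sqrt hp
        _ = 1 := Real.sqrt_one
    have hdist : ‖x‖ / 2 ≤ ‖y - x‖ := by
      have := norm_sub_norm_le x y
      rw [norm_sub_rev] at this
      linarith
    have hd2 : (0 : ℝ) < ‖y - x‖ := lt_of_lt_of_le (by linarith) hdist
    rw [norm_inv, norm_pow, norm_norm]
    have h3 : (‖x‖ / 2) ^ 3 ≤ ‖y - x‖ ^ 3 := by
      apply pow_le_pow_left₀ (by positivity) hdist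
    have hpos2 : (0 : ℝ) < (‖x‖ / 2) ^ 3 := by positivity
    calc (‖y - x‖ ^ 3)⁻¹ ≤ ((‖x‖ / 2) ^ 3)⁻¹ := by
          apply inv_anti₀ hpos2 h3
      _ = 8 / ‖x‖ ^ 3 := by field_simp; ring
  have hI := norm_setIntegral_le_of_norm_le_const_ae' (μ := volume) disk_volume_lt
    (C := 8 / ‖x‖ ^ 3)
    (f := fun p : ℝ × ℝ => (‖((WithLp.equiv 2 (Fin 3 → ℝ)).symm ![p.1, p.2, 0]) - x‖ ^ 3)⁻¹)
    (Filter.Eventually.of_forall key)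
  have hInt : |∫ p in {p : ℝ × ℝ | p.1 ^ 2 + p.2 ^ 2 ≤ 1},
      (‖((WithLp.equiv 2 (Fin 3 → ℝ)).symm ![p.1, p.2, 0]) - x‖ ^ 3)⁻¹| ≤ 32 / ‖x‖ ^ 3 := by
    rw [← Real.norm_eq_abs]
    calc ‖∫ p in {p : ℝ × ℝ | p.1 ^ 2 + p.2 ^ 2 ≤ 1},
          (‖((WithLp.equiv 2 (Fin 3 → ℝ)).symm ![p.1, p.2, 0]) - x‖ ^ 3)⁻¹‖
        ≤ 8 / ‖x‖ ^ 3 * (volume {p : ℝ × ℝ | p.1 ^ 2 + p.2 ^ 2 ≤ 1}).toReal := hI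
      _ ≤ 8 / ‖x‖ ^ 3 * 4 := by
          apply mul_le_mul_of_nonneg_left disk_volume_toReal (by positivity)
      _ = 32 / ‖x‖ ^ 3 := by ring
  have hx2 : |x 2| ≤ ‖x‖ := by
    rw [EuclideanSpace.norm_eq]
    have : |x 2| = Real.sqrt (x 2 ^ 2) := (Real.sqrt_sq_eq_abs _).symm
    rw [this]
    apply Real.sqrt_le_sqrt
    have := sq_nonneg (x 0)
    have := sq_nonneg (x 1)
    simp [Fin.sum_univ_three]
    nlinarith
  rw [solidAngleDisk, abs_mul, abs_neg, abs_div]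
  have hpi : |4 * π| = 4 * π := abs_of_pos (by positivity)
  rw [hpi]
  calc |x 2| / (4 * π) * |_| ≤ ‖x‖ / (4 * π) * (32 / ‖x‖ ^ 3) := by
        apply mul_le_mul (div_le_div_of_nonneg_right hx2 (by positivity)) hInt
          (abs_nonneg _) (by positivity)
    _ = 8 / π / ‖x‖ ^ 2 := by field_simp; ring
    _ ≤ 3 / ‖x‖ ^ 2 := by
        apply div_le_div_of_nonneg_right _ (by positivity)
        rw [div_le_iff₀ Real.pi_pos]
        nlinarith [Real.pi_gt_three]

/-- For every `t ∈ (0,1)` there exists `R > 0` such that every `x ∈ ℝ³ \ D̄` with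
`Φ̃(x) − t ∈ ℤ` satisfies `‖x‖ ≤ R`: the level sets of the solid-angle map of the unit
circle at levels `t ≢ 0 (mod 1)` are bounded. -/
theorem solidAngleDisk_level_sets_bounded (t : ℝ) (ht : t ∈ Set.Ioo (0 : ℝ) 1) :
    ∃ R : ℝ, 0 < R ∧ ∀ x : EuclideanSpace ℝ (Fin 3), x ∉ closedUnitDisk →
      (∃ m : ℤ, solidAngleDisk x - t = (m : ℝ)) → ‖x‖ ≤ R := by
  obtain ⟨ht0, ht1⟩ := ht
  set ε := min t (1 - t) with hε
  have hεpos : 0 < ε := lt_min ht0 (by linarith)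
  refine ⟨2 + Real.sqrt (3 / ε), by positivity, ?_⟩
  intro x _ ⟨m, hm⟩
  by_contra hR
  push_neg at hR
  have hsqrt : 0 ≤ Real.sqrt (3 / ε) := Real.sqrt_nonneg _
  have hx2 : 2 ≤ ‖x‖ := by linarith
  have hdecay := solidAngleDisk_decay x hx2
  have hxgt : Real.sqrt (3 / ε) < ‖x‖ := by linarith
  have hsq : 3 / ε < ‖x‖ ^ 2 := by
    have h1 : Real.sqrt (3 / ε) ^ 2 < ‖x‖ ^ 2 := by
      exact pow_lt_pow_left₀ hxgt hsqrt (by norm_num)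
    rwa [Real.sq_sqrt (by positivity)] at h1
  have hsmall : |solidAngleDisk x| < ε := by
    have h2 : 3 / ‖x‖ ^ 2 < ε := by
      rw [div_lt_iff₀ (by positivity)]
      rw [div_lt_iff₀ hεpos] at hsq
      nlinarith
    linarith
  -- solidAngleDisk x = t + m, with |t + m| < ε ≤ min t (1-t)
  have heq : solidAngleDisk x = t + (m : ℝ) := by linarith
  rw [heq] at hsmall
  have hεt : ε ≤ t := min_le_left _ _
  have hεt' : ε ≤ 1 - t := min_le_right _ _
  rw [abs_lt] at hsmall
  have hm0 : (m : ℝ) < 0 := by linarith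
  have hm1 : (-1 : ℝ) < (m : ℝ) := by linarith
  have : (m : ℤ) < 0 := by exact_mod_cast hm0
  have : (-1 : ℤ) < m := by exact_mod_cast hm1
  omega
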